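/- Let A, B, c ∈ ℝ with A² + B² = 1 and let ε = ±1. On the open set U := {(u,v) ∈ ℝ² : A·u + B·v + c < 0}, the function θ(u,v) := 2ε·artanh(exp(A·u + B·v + c)) is smooth on U and satisfies the elliptic sinh-Gordon equation ∂²θ/∂v² + ∂²θ/∂u² = cosh θ · sinh θ at every point of U. -/

import Mathlib

/-- Partial derivative with respect to the first variable `u`. -/
noncomputable def pdu (f : ℝ × ℝ → ℝ) (p : ℝ × ℝ) : ℝ :=
  deriv (fun u => f (u, p.2)) p.1

/-- Partial derivative with respect to the second variable `v`. -/
noncomputable def pdv (f : ℝ × ℝ → ℝ) (p : ℝ × ℝ) : ℝ :=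
  deriv (fun v => f (p.1, v)) p.2

/-- The inverse hyperbolic tangent, `artanh x = (1/2)·log((1+x)/(1−x))`,
the inverse of `tanh` for arguments in `(−1,1)`. -/
noncomputable def artanh (x : ℝ) : ℝ :=
  Real.log ((1 + x) / (1 - x)) / 2

noncomputable def sgF (ε s : ℝ) : ℝ :=
  ε * (Real.log (1 + Real.exp s) - Real.log (1 - Real.exp s))

noncomputable def sgF1 (ε s : ℝ) : ℝ :=
  ε * (Real.exp s / (1 + Real.exp s) + Real.exp s / (1 - Real.exp s))

noncomputable def sgF2 (ε s : ℝ) : ℝ :=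
  ε * (Real.exp s / (1 + Real.exp s) ^ 2 + Real.exp s / (1 - Real.exp s) ^ 2)

lemma exp_lt_one_of_neg {s : ℝ} (hs : s < 0) : Real.exp s < 1 := by
  simpa using Real.exp_lt_exp.2 hs

lemma hasDeriv_sgF (ε : ℝ) {s : ℝ} (hs : s < 0) : HasDerivAt (sgF ε) (sgF1 ε s) s := by
  have he := Real.hasDerivAt_exp s
  have h1p : (0:ℝ) < 1 + Real.exp s := by positivity
  have h1m : (0:ℝ) < 1 - Real.exp s := by linarith [exp_lt_one_of_neg hs]
  have h1 : HasDerivAt (fun s => Real.log (1 + Real.exp s)) (Real.exp s / (1 + Real.exp s)) s :=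
    (he.const_add 1).log (ne_of_gt h1p)
  have h2 : HasDerivAt (fun s => Real.log (1 - Real.exp s)) (-Real.exp s / (1 - Real.exp s)) s :=
    (he.const_sub 1).log (ne_of_gt h1m)
  have := ((h1.sub h2).const_mul ε)
  unfold sgF1
  convert this using 2
  any_goals with_reducible_and_instances rfl
  · rfl
  field_simp
  ring

lemma hasDeriv_sgF1 (ε : ℝ) {s : ℝ} (hs : s < 0) : HasDerivAt (sgF1 ε) (sgF2 ε s) s := by
  have he := Real.hasDerivAt_exp s
  have h1p : (0:ℝ) < 1 + Real.exp s := by positivity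
  have h1m : (0:ℝ) < 1 - Real.exp s := by linarith [exp_lt_one_of_neg hs]
  have h1 : HasDerivAt (fun s => Real.exp s / (1 + Real.exp s))
      ((Real.exp s * (1 + Real.exp s) - Real.exp s * Real.exp s) / (1 + Real.exp s) ^ 2) s :=
    he.div (he.const_add 1) (ne_of_gt h1p)
  have h2 : HasDerivAt (fun s => Real.exp s / (1 - Real.exp s))
      ((Real.exp s * (1 - Real.exp s) - Real.exp s * (-Real.exp s)) / (1 - Real.exp s) ^ 2) s :=
    he.div (he.const_sub 1) (ne_of_gt h1m)
  have := (h1.add h2).const_mul ε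
  unfold sgF2
  convert this using 2
  any_goals with_reducible_and_instances rfl
  · rfl
  field_simp
  ring

lemma sgF2_eq_cosh_mul_sinh (ε : ℝ) (hε : ε = 1 ∨ ε = -1) {s : ℝ} (hs : s < 0) :
    sgF2 ε s = Real.cosh (sgF ε s) * Real.sinh (sgF ε s) := by
  have ht0 : (0:ℝ) < Real.exp s := Real.exp_pos s
  have ht1 : Real.exp s < 1 := exp_lt_one_of_neg hs
  have h1p : (0:ℝ) < 1 + Real.exp s := by linarith
  have h1m : (0:ℝ) < 1 - Real.exp s := by linarith
  unfold sgF sgF2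
  rcases hε with rfl | rfl
  · rw [Real.cosh_eq, Real.sinh_eq]
    simp only [one_mul, neg_sub]
    rw [Real.exp_sub, Real.exp_sub, Real.exp_log h1p, Real.exp_log h1m]
    field_simp
    ring
  · rw [Real.cosh_eq, Real.sinh_eq]
    simp only [neg_mul, one_mul, neg_neg, neg_sub]
    rw [Real.exp_sub, Real.exp_sub, Real.exp_log h1p, Real.exp_log h1m]
    field_simp
    ring

/-- The 1-soliton `θ(u,v) = 2ε·artanh(exp(A·u + B·v + c))` with `A² + B² = 1`, `ε = ±1`,
is smooth on `U = {A·u + B·v + c < 0}` and satisfies the elliptic sinh-Gordon equation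
`∂²θ/∂v² + ∂²θ/∂u² = cosh θ · sinh θ` on `U`. -/
theorem oneSoliton_elliptic_sinhGordon
    (A B c ε : ℝ) (hAB : A ^ 2 + B ^ 2 = 1) (hε : ε = 1 ∨ ε = -1)
    (U : Set (ℝ × ℝ)) (hU : U = {p : ℝ × ℝ | A * p.1 + B * p.2 + c < 0})
    (θ : ℝ × ℝ → ℝ)
    (hθ : θ = fun p : ℝ × ℝ => 2 * ε * artanh (Real.exp (A * p.1 + B * p.2 + c))) :
    ContDiffOn ℝ (⊤ : ℕ∞) θ U ∧
      ∀ p ∈ U,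
        pdv (pdv θ) p + pdu (pdu θ) p = Real.cosh (θ p) * Real.sinh (θ p) := by
  subst hU hθ
  -- θ coincides with sgF ε ∘ (linear map) on U
  have hθF : ∀ s : ℝ, s < 0 →
      2 * ε * artanh (Real.exp s) = sgF ε s := by
    intro s hs
    have h1p : (0:ℝ) < 1 + Real.exp s := by positivity
    have h1m : (0:ℝ) < 1 - Real.exp s := by linarith [exp_lt_one_of_neg hs]
    unfold artanh sgF
    rw [Real.log_div (ne_of_gt h1p) (ne_of_gt h1m)]
    ring
  constructor
  · -- smoothness
    have hLin : ContDiff ℝ (⊤ : ℕ∞) (fun p : ℝ × ℝ => A * p.1 + B * p.2 + c) := by fun_prop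
    have hsm : ContDiffOn ℝ (⊤ : ℕ∞) (fun p : ℝ × ℝ => sgF ε (A * p.1 + B * p.2 + c))
        {p : ℝ × ℝ | A * p.1 + B * p.2 + c < 0} := by
      unfold sgF
      have he : ContDiffOn ℝ (⊤ : ℕ∞) (fun p : ℝ × ℝ => Real.exp (A * p.1 + B * p.2 + c))
          {p : ℝ × ℝ | A * p.1 + B * p.2 + c < 0} := (hLin.exp).contDiffOn
      refine ContDiffOn.mul contDiffOn_const (ContDiffOn.sub ?_ ?_)
      · refine (contDiffOn_const.add he).log ?_
        intro p hp
        have := Real.exp_pos (A * p.1 + B * p.2 + c)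
        positivity
      · refine (contDiffOn_const.sub he).log ?_
        intro p hp
        have := exp_lt_one_of_neg (hp : A * p.1 + B * p.2 + c < 0)
        intro h
        simp only [sub_eq_zero] at h
        linarith
    exact hsm.congr fun p hp => hθF _ hp
  · -- the PDE
    intro p hp
    have hcontL : ∀ q2 : ℝ, Continuous fun u : ℝ => A * u + B * q2 + c := by
      intro q2; fun_prop
    have hcontL' : ∀ q1 : ℝ, Continuous fun v : ℝ => A * q1 + B * v + c := by
      intro q1; fun_prop
    -- first partials on U
    have hpdu : ∀ q : ℝ × ℝ, A * q.1 + B * q.2 + c < 0 →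
        pdu (fun p : ℝ × ℝ => 2 * ε * artanh (Real.exp (A * p.1 + B * p.2 + c))) q
          = A * sgF1 ε (A * q.1 + B * q.2 + c) := by
      intro q hq
      unfold pdu
      have hev : (fun u => 2 * ε * artanh (Real.exp (A * u + B * q.2 + c)))
          =ᶠ[nhds q.1] fun u => sgF ε (A * u + B * q.2 + c) := by
        have hnb : ∀ᶠ u in nhds q.1, A * u + B * q.2 + c < 0 :=
          (hcontL q.2).continuousAt.eventually_lt continuousAt_const hq
        filter_upwards [hnb] with u hu using hθF _ hu
      rw [hev.deriv_eq]
      have hlin : HasDerivAt (fun u : ℝ => A * u + B * q.2 + c) A q.1 := by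
        have : HasDerivAt (fun u : ℝ => A * u + (B * q.2 + c)) A q.1 := by
          simpa using ((hasDerivAt_id q.1).const_mul A).add_const (B * q.2 + c)
        convert this using 2; ring
      have hd : HasDerivAt (fun u => sgF ε (A * u + B * q.2 + c))
          (sgF1 ε (A * q.1 + B * q.2 + c) * A) q.1 :=
        (hasDeriv_sgF ε hq).comp (h₂ := sgF ε) q.1 hlin
      rw [hd.deriv]; ring
    have hpdv : ∀ q : ℝ × ℝ, A * q.1 + B * q.2 + c < 0 →
        pdv (fun p : ℝ × ℝ => 2 * ε * artanh (Real.exp (A * p.1 + B * p.2 + c))) q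
          = B * sgF1 ε (A * q.1 + B * q.2 + c) := by
      intro q hq
      unfold pdv
      have hev : (fun v => 2 * ε * artanh (Real.exp (A * q.1 + B * v + c)))
          =ᶠ[nhds q.2] fun v => sgF ε (A * q.1 + B * v + c) := by
        have hnb : ∀ᶠ v in nhds q.2, A * q.1 + B * v + c < 0 :=
          (hcontL' q.1).continuousAt.eventually_lt continuousAt_const hq
        filter_upwards [hnb] with v hv using hθF _ hv
      rw [hev.deriv_eq]
      have hlin : HasDerivAt (fun v : ℝ => A * q.1 + B * v + c) B q.2 := by
        have : HasDerivAt (fun v : ℝ => B * v + (A * q.1 + c)) B q.2 := by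
          simpa using ((hasDerivAt_id q.2).const_mul B).add_const (A * q.1 + c)
        convert this using 2; ring
      have hd : HasDerivAt (fun v => sgF ε (A * q.1 + B * v + c))
          (sgF1 ε (A * q.1 + B * q.2 + c) * B) q.2 :=
        (hasDeriv_sgF ε hq).comp (h₂ := sgF ε) q.2 hlin
      rw [hd.deriv]; ring
    have hp' : A * p.1 + B * p.2 + c < 0 := hp
    -- second partials at p
    have hduu : pdu (pdu (fun p : ℝ × ℝ =>
        2 * ε * artanh (Real.exp (A * p.1 + B * p.2 + c)))) p
          = A * (sgF2 ε (A * p.1 + B * p.2 + c) * A) := by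
      show deriv (fun u => pdu (fun p : ℝ × ℝ =>
        2 * ε * artanh (Real.exp (A * p.1 + B * p.2 + c))) (u, p.2)) p.1 = _
      have hev : (fun u => pdu (fun p : ℝ × ℝ =>
            2 * ε * artanh (Real.exp (A * p.1 + B * p.2 + c))) (u, p.2))
          =ᶠ[nhds p.1] fun u => A * sgF1 ε (A * u + B * p.2 + c) := by
        have hnb : ∀ᶠ u in nhds p.1, A * u + B * p.2 + c < 0 :=
          (hcontL p.2).continuousAt.eventually_lt continuousAt_const hp'
        filter_upwards [hnb] with u hu using hpdu (u, p.2) hu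
      have hlin : HasDerivAt (fun u : ℝ => A * u + B * p.2 + c) A p.1 := by
        have : HasDerivAt (fun u : ℝ => A * u + (B * p.2 + c)) A p.1 := by
          simpa using ((hasDerivAt_id p.1).const_mul A).add_const (B * p.2 + c)
        convert this using 2; ring
      have hd : HasDerivAt (fun u => A * sgF1 ε (A * u + B * p.2 + c))
          (A * (sgF2 ε (A * p.1 + B * p.2 + c) * A)) p.1 :=
        ((hasDeriv_sgF1 ε hp').comp (h₂ := sgF1 ε) p.1 hlin).const_mul A
      rw [hev.deriv_eq, hd.deriv]
    have hdvv : pdv (pdv (fun p : ℝ × ℝ =>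
        2 * ε * artanh (Real.exp (A * p.1 + B * p.2 + c)))) p
          = B * (sgF2 ε (A * p.1 + B * p.2 + c) * B) := by
      show deriv (fun v => pdv (fun p : ℝ × ℝ =>
        2 * ε * artanh (Real.exp (A * p.1 + B * p.2 + c))) (p.1, v)) p.2 = _
      have hev : (fun v => pdv (fun p : ℝ × ℝ =>
            2 * ε * artanh (Real.exp (A * p.1 + B * p.2 + c))) (p.1, v))
          =ᶠ[nhds p.2] fun v => B * sgF1 ε (A * p.1 + B * v + c) := by
        have hnb : ∀ᶠ v in nhds p.2, A * p.1 + B * v + c < 0 :=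
          (hcontL' p.1).continuousAt.eventually_lt continuousAt_const hp'
        filter_upwards [hnb] with v hv using hpdv (p.1, v) hv
      have hlin : HasDerivAt (fun v : ℝ => A * p.1 + B * v + c) B p.2 := by
        have : HasDerivAt (fun v : ℝ => B * v + (A * p.1 + c)) B p.2 := by
          simpa using ((hasDerivAt_id p.2).const_mul B).add_const (A * p.1 + c)
        convert this using 2; ring
      have hd : HasDerivAt (fun v => B * sgF1 ε (A * p.1 + B * v + c))
          (B * (sgF2 ε (A * p.1 + B * p.2 + c) * B)) p.2 :=
        ((hasDeriv_sgF1 ε hp').comp (h₂ := sgF1 ε) p.2 hlin).const_mul B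
      rw [hev.deriv_eq, hd.deriv]
    rw [hduu, hdvv]
    simp only [hθF _ hp', ← sgF2_eq_cosh_mul_sinh ε hε hp']
    linear_combination sgF2 ε (A * p.1 + B * p.2 + c) * hAB
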